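/- Let P be a poset. If the space (P, σ(P)) is core-compact, then on the complete lattice Γ(P) of Scott closed subsets of P the Scott topology coincides with the lower Vietoris topology, σ(Γ(P)) = υ(Γ(P)), and moreover (Γ(P), σ(Γ(P))) is sober and locally compact. -/

import Mathlib

/-!
Each `◊U` is Scott open in `Γ(P)` because a directed supremum of closed sets is the closure of
their union. Conversely, a Scott open `𝒰 ∋ A` already contains a finitely generated
`↓x₁ ∪ … ∪ ↓xₙ ⊆ A`. Adding one point at a time, core-compactness provides open sets `Vᵢ ∋ xᵢ`,
each way below the Scott open set `{z | ↓z ∪ C ∈ 𝒰}` for the part `C` already built, such that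
`◊V₁ ∩ … ∩ ◊Vₙ ⊆ 𝒰`; the sets `B` with `V ≪ {z | ↓z ∪ B ∈ 𝒰}` are again Scott open by
interpolation.

In the lower Vietoris topology the specialization order is inclusion, so an irreducible closed
family has its supremum as generic point. An ultrafilter `F` converges to the complement of the
union of all open `U` with `◊U ∉ F`; when `V ≪ U`, this makes the set of closed sets meeting every
`W ≫ V` a compact set between `◊V` and `◊U`.
-/

open Topology TopologicalSpace Set

/-- `x` is way-below `y`: for every directed set `d` having a least upper bound `a`,
if `y ≤ a` then some element of `d` dominates `x`. -/
def WayBelow {α : Type*} [Preorder α] (x y : α) : Prop :=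
  ∀ d : Set α, d.Nonempty → DirectedOn (· ≤ ·) d → ∀ a : α, IsLUB d a → y ≤ a → ∃ z ∈ d, x ≤ z

/-- A poset is continuous if for every `x` the set of elements way-below `x` is directed
(in particular nonempty) with least upper bound `x`. -/
def ContinuousPoset (α : Type*) [Preorder α] : Prop :=
  ∀ x : α, {d : α | WayBelow d x}.Nonempty ∧ DirectedOn (· ≤ ·) {d : α | WayBelow d x} ∧
    IsLUB {d : α | WayBelow d x} x

/-- A topological space is core-compact if its lattice of open subsets is a continuous
lattice. -/
def CoreCompact (X : Type*) [TopologicalSpace X] : Prop :=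
  ContinuousPoset (TopologicalSpace.Opens X)

/-- The lower Vietoris topology on the lattice of closed subsets of a topological space,
generated by the subbasis of sets `◊U = {A closed | A ∩ U ≠ ∅}` for `U` open. -/
def lowerVietoris (X : Type*) [TopologicalSpace X] :
    TopologicalSpace (TopologicalSpace.Closeds X) :=
  TopologicalSpace.generateFrom
    {S | ∃ U : Set X, IsOpen U ∧ S = {A : TopologicalSpace.Closeds X | ((A : Set X) ∩ U).Nonempty}}

section Preorder

variable {α : Type*} [Preorder α] {x x' y y' : α}

lemma WayBelow.le (h : WayBelow x y) : x ≤ y := by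
  obtain ⟨_, rfl, hxz⟩ :=
    h {y} (singleton_nonempty y) (directedOn_singleton y) y isLUB_singleton le_rfl
  exact hxz

lemma WayBelow.mono_left (hx : x ≤ x') (h : WayBelow x' y) : WayBelow x y :=
  fun d hd hdir a ha hya => (h d hd hdir a ha hya).imp fun _ ⟨hz, hxz⟩ => ⟨hz, hx.trans hxz⟩

lemma WayBelow.mono_right (h : WayBelow x y) (hy : y ≤ y') : WayBelow x y' :=
  fun d hd hdir a ha hya => h d hd hdir a ha (hy.trans hya)

/-- Interpolation: the elements way below some element way below `z` form a directed set with
supremum `z`, so anything way below `z` lies below one of them. -/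
lemma ContinuousPoset.exists_wayBelow_wayBelow (hα : ContinuousPoset α) {x z : α}
    (h : WayBelow x z) : ∃ y, WayBelow x y ∧ WayBelow y z := by
  set D := {u | ∃ v, WayBelow u v ∧ WayBelow v z}
  obtain ⟨⟨v₀, hv₀⟩, hdir_z, hlub_z⟩ := hα z
  have hne : D.Nonempty := by
    obtain ⟨⟨u₀, hu₀⟩, -, -⟩ := hα v₀
    exact ⟨u₀, v₀, hu₀, hv₀⟩
  have hdir : DirectedOn (· ≤ ·) D := by
    rintro u₁ ⟨v₁, hu₁, hv₁⟩ u₂ ⟨v₂, hu₂, hv₂⟩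
    obtain ⟨v, hv, hv₁v, hv₂v⟩ := hdir_z v₁ hv₁ v₂ hv₂
    obtain ⟨u, hu, hu₁u, hu₂u⟩ := (hα v).2.1 u₁ (hu₁.mono_right hv₁v) u₂ (hu₂.mono_right hv₂v)
    exact ⟨u, ⟨v, hu, hv⟩, hu₁u, hu₂u⟩
  have hlub : IsLUB D z := by
    refine ⟨fun u ⟨v, huv, hvz⟩ => huv.le.trans hvz.le, fun b hb => hlub_z.2 fun v hv => ?_⟩
    exact (hα v).2.2.2 fun u hu => hb ⟨v, hu, hv⟩
  obtain ⟨u, ⟨v, huv, hvz⟩, hxu⟩ := h D hne hdir z hlub le_rfl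
  exact ⟨v, huv.mono_left hxu, hvz⟩

lemma isOpen_scott_iff {s : Set α} :
    IsOpen[scott α univ] s ↔ IsUpperSet s ∧ DirSupInacc s := by
  let _ := scott α univ
  have _ : IsScott α univ := ⟨rfl⟩
  rw [IsScott.isOpen_iff_isUpperSet_and_dirSupInaccOn (D := univ), dirSupInaccOn_univ]

lemma ContinuousPoset.isOpen_setOf_wayBelow (hα : ContinuousPoset α) (x : α) :
    IsOpen[scott α univ] {y | WayBelow x y} := by
  refine isOpen_scott_iff.2 ⟨fun y y' hyy' hy => hy.mono_right hyy', ?_⟩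
  intro d hne hdir a hlub hxa
  obtain ⟨y, hxy, hya⟩ := hα.exists_wayBelow_wayBelow hxa
  obtain ⟨z, hz, hyz⟩ := hya d hne hdir a hlub le_rfl
  exact ⟨z, hz, hxy.mono_right hyz⟩

lemma ScottContinuous.isOpen_preimage {β : Type*} [Preorder β] {f : α → β}
    (hf : ScottContinuous f) {s : Set β} (hs : IsOpen[scott β univ] s) :
    IsOpen[scott α univ] (f ⁻¹' s) := by
  let _ := scott α univ
  let _ := scott β univ
  have _ : IsScott α univ := ⟨rfl⟩
  have _ : IsScott β univ := ⟨rfl⟩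
  have hcont : Continuous f :=
    (IsScott.scottContinuousOn_iff_continuous fun _ _ _ => mem_univ _).1 hf.scottContinuousOn
  exact hcont.isOpen_preimage s hs

end Preorder

lemma CoreCompact.exists_wayBelow_mem {X : Type*} [TopologicalSpace X] (hX : CoreCompact X)
    {U : Opens X} {x : X} (hx : x ∈ U) : ∃ V : Opens X, WayBelow V U ∧ x ∈ V := by
  rw [← (hX U).2.2.sSup_eq] at hx
  exact Opens.mem_sSup.1 hx

namespace TopologicalSpace.Closeds

attribute [local instance] lowerVietoris

section LowerVietoris

variable {X : Type*} [TopologicalSpace X]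

/-- The subbasic set `◊U` of `lowerVietoris X`. -/
def hitting (U : Set X) : Set (Closeds X) := {A | ((A : Set X) ∩ U).Nonempty}

lemma isOpen_hitting {U : Set X} (hU : IsOpen U) : IsOpen (hitting U) :=
  GenerateOpen.basic _ ⟨U, hU, rfl⟩

lemma hitting_mono {U V : Set X} (h : U ⊆ V) : hitting U ⊆ hitting V :=
  fun _ hA => hA.mono (inter_subset_inter_right _ h)

lemma sSup_mem_hitting_iff {S : Set (Closeds X)} {U : Set X} (hU : IsOpen U) :
    sSup S ∈ hitting U ↔ ∃ A ∈ S, A ∈ hitting U := by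
  simp only [hitting, mem_ofPred_eq, coe_sSup, closure_inter_open_nonempty_iff hU,
    sUnion_image, iUnion_inter, nonempty_iUnion, exists_prop]

lemma isOpen_scott_hitting {U : Set X} (hU : IsOpen U) :
    IsOpen[scott (Closeds X) univ] (hitting U) := by
  refine isOpen_scott_iff.2 ⟨fun _ _ hAB hA => hA.mono (inter_subset_inter_left _ hAB), ?_⟩
  intro d _ _ a hlub ha
  rwa [← hlub.sSup_eq, sSup_mem_hitting_iff hU] at ha

lemma scott_le_lowerVietoris : scott (Closeds X) univ ≤ lowerVietoris X :=
  le_generateFrom fun _ ⟨_, hU, hs⟩ => hs ▸ isOpen_scott_hitting hU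

lemma isUpperSet_of_isOpen {s : Set (Closeds X)} (hs : IsOpen s) : IsUpperSet s :=
  (isOpen_scott_iff.1 (scott_le_lowerVietoris s hs)).1

lemma specializes_iff_le {A B : Closeds X} : A ⤳ B ↔ B ≤ A := by
  refine ⟨fun h => ?_, fun h =>
    specializes_iff_forall_open.2 fun s hs hB => isUpperSet_of_isOpen hs h hB⟩
  by_contra hBA
  obtain ⟨x, hxB, hxA⟩ := not_subset.1 hBA
  obtain ⟨y, hyA, hyA'⟩ := h.mem_open (isOpen_hitting A.isClosed.isOpen_compl) ⟨x, hxB, hxA⟩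
  exact hyA' hyA

lemma t0Space : T0Space (Closeds X) :=
  ⟨fun _ _ h =>
    le_antisymm (specializes_iff_le.1 h.specializes') (specializes_iff_le.1 h.specializes)⟩

lemma isTopologicalBasis_lowerVietoris :
    IsTopologicalBasis ((fun f => ⋂₀ f) '' {f : Set (Set (Closeds X)) |
      f.Finite ∧ f ⊆ {s | ∃ U : Set X, IsOpen U ∧ s = hitting U}}) :=
  isTopologicalBasis_of_subbasis rfl

lemma sSup_mem_of_isIrreducible {S : Set (Closeds X)} (hirr : IsIrreducible S) (hS : IsClosed S) :
    sSup S ∈ S := by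
  refine hS.closure_subset (isTopologicalBasis_lowerVietoris.mem_closure_iff.2 ?_)
  rintro _ ⟨f, ⟨hf, hfsub⟩, rfl⟩ hsup
  have hmeet : ∀ u ∈ hf.toFinset, (S ∩ u).Nonempty := fun u hu => by
    obtain ⟨U, hU, rfl⟩ := hfsub (hf.mem_toFinset.1 hu)
    obtain ⟨A, hAS, hA⟩ := (sSup_mem_hitting_iff hU).1 (hsup _ (hf.mem_toFinset.1 hu))
    exact ⟨A, hAS, hA⟩
  have hopen : ∀ u ∈ hf.toFinset, IsOpen u := fun u hu => by
    obtain ⟨U, hU, rfl⟩ := hfsub (hf.mem_toFinset.1 hu)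
    exact isOpen_hitting hU
  simpa [inter_comm] using isIrreducible_iff_sInter.1 hirr hf.toFinset hopen hmeet

lemma quasiSober : QuasiSober (Closeds X) where
  sober {S} hirr hS := ⟨sSup S, isGenericPoint_iff_specializes.2 fun _ =>
    ⟨fun h => h.mem_closed hS (sSup_mem_of_isIrreducible hirr hS),
      fun hA => specializes_iff_le.2 (le_sSup hA)⟩⟩

def missedOpen (F : Ultrafilter (Closeds X)) : Opens X := sSup {U | hitting (U : Set X) ∉ F}

def ultrafilterLimit (F : Ultrafilter (Closeds X)) : Closeds X :=
  ⟨(missedOpen F : Set X)ᶜ, (missedOpen F).isOpen.isClosed_compl⟩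

lemma hitting_mem_of_ultrafilterLimit_mem {F : Ultrafilter (Closeds X)} {U : Set X}
    (hU : IsOpen U) (h : ultrafilterLimit F ∈ hitting U) : hitting U ∈ F := by
  by_contra hUF
  obtain ⟨x, hx, hxU⟩ := h
  exact hx (Opens.mem_sSup.2 ⟨⟨U, hU⟩, hUF, hxU⟩)

lemma le_nhds_ultrafilterLimit (F : Ultrafilter (Closeds X)) :
    (F : Filter (Closeds X)) ≤ 𝓝 (ultrafilterLimit F) :=
  tendsto_nhds_generateFrom_iff.2 <| by
    rintro _ ⟨U, hU, rfl⟩ h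
    exact hitting_mem_of_ultrafilterLimit_mem hU h

/-- Since `◊(U ⊔ V) = ◊U ∪ ◊V` and `F` is an ultrafilter, the open sets `U` with `◊U ∉ F` form a
directed family; so an open set way below their union lies in one of them. -/
lemma hitting_notMem_of_wayBelow_missedOpen {F : Ultrafilter (Closeds X)} {V : Opens X}
    (hV : WayBelow V (missedOpen F)) : hitting (V : Set X) ∉ F := by
  have hbot : hitting ((⊥ : Opens X) : Set X) ∉ F := by simp [hitting]
  have hdir : DirectedOn (· ≤ ·) {U : Opens X | hitting (U : Set X) ∉ F} := by
    intro U₁ h₁ U₂ h₂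
    refine ⟨U₁ ⊔ U₂, fun h => ?_, le_sup_left, le_sup_right⟩
    have hsplit : hitting ((U₁ ⊔ U₂ : Opens X) : Set X) = hitting U₁ ∪ hitting U₂ := by
      ext A
      simp [hitting, inter_union_distrib_left, union_nonempty]
    rw [hsplit, Ultrafilter.union_mem_iff] at h
    exact h.elim h₁ h₂
  obtain ⟨U, hU, hVU⟩ := hV _ ⟨⊥, hbot⟩ hdir _ (isLUB_sSup _) le_rfl
  exact fun hVF => hU (F.mem_of_superset hVF (hitting_mono hVU))

def hittingWayAbove (V : Opens X) : Set (Closeds X) :=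
  {A | ∀ W : Opens X, WayBelow V W → A ∈ hitting (W : Set X)}

lemma ultrafilterLimit_mem_hittingWayAbove (hX : CoreCompact X) {F : Ultrafilter (Closeds X)}
    {V : Opens X} (hVF : hittingWayAbove V ∈ F) : ultrafilterLimit F ∈ hittingWayAbove V := by
  intro W hVW
  obtain ⟨V', hVV', hV'W⟩ := ContinuousPoset.exists_wayBelow_wayBelow hX hVW
  by_contra hW
  have hW_le : W ≤ missedOpen F := fun x hxW => by_contra fun hx => hW ⟨x, hx, hxW⟩
  exact hitting_notMem_of_wayBelow_missedOpen (hV'W.mono_right hW_le)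
    (F.mem_of_superset hVF fun _ hA => hA V' hVV')

lemma isCompact_biInter_hittingWayAbove (hX : CoreCompact X) {ι : Type*} (s : Set ι)
    (V : ι → Opens X) : IsCompact (⋂ i ∈ s, hittingWayAbove (V i)) := by
  refine isCompact_iff_ultrafilter_le_nhds.2 fun F hF => ⟨ultrafilterLimit F, ?_,
    le_nhds_ultrafilterLimit F⟩
  have hFs : ⋂ i ∈ s, hittingWayAbove (V i) ∈ F := Filter.le_principal_iff.1 hF
  exact mem_iInter₂.2 fun i hi =>
    ultrafilterLimit_mem_hittingWayAbove hX (F.mem_of_superset hFs (biInter_subset_of_mem hi))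

lemma hittingWayAbove_mem_nhds {V : Opens X} {A : Closeds X} (hA : A ∈ hitting (V : Set X)) :
    hittingWayAbove V ∈ 𝓝 A :=
  Filter.mem_of_superset ((isOpen_hitting V.isOpen).mem_nhds hA)
    fun _ hB _ hVW => hitting_mono hVW.le hB

lemma exists_hittingWayAbove_subset (hX : CoreCompact X) {U : Set X} (hU : IsOpen U)
    {A : Closeds X} (hA : A ∈ hitting U) :
    ∃ V : Opens X, A ∈ hitting (V : Set X) ∧ hittingWayAbove V ⊆ hitting U := by
  obtain ⟨x, hxA, hxU⟩ := hA
  obtain ⟨V, hVU, hxV⟩ := hX.exists_wayBelow_mem (U := ⟨U, hU⟩) hxU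
  exact ⟨V, ⟨x, hxA, hxV⟩, fun _ hB => hB ⟨U, hU⟩ hVU⟩

lemma locallyCompactSpace (hX : CoreCompact X) : LocallyCompactSpace (Closeds X) := by
  refine ⟨fun A n hn => ?_⟩
  obtain ⟨_, ⟨f, ⟨hf, hfsub⟩, rfl⟩, hAf, hfn⟩ :=
    isTopologicalBasis_lowerVietoris.mem_nhds_iff.1 hn
  have hV : ∀ u ∈ f, ∃ V : Opens X, A ∈ hitting (V : Set X) ∧ hittingWayAbove V ⊆ u := by
    intro u hu
    obtain ⟨U, hU, rfl⟩ := hfsub hu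
    exact exists_hittingWayAbove_subset hX hU (hAf _ hu)
  choose! V hAV hVu using hV
  refine ⟨⋂ u ∈ f, hittingWayAbove (V u), (Filter.biInter_mem hf).2 fun u hu =>
    hittingWayAbove_mem_nhds (hAV u hu),
    fun B hB => hfn fun u hu => hVu u hu (mem_iInter₂.1 hB u hu),
    isCompact_biInter_hittingWayAbove hX f V⟩

end LowerVietoris

section ScottClosed

variable {P : Type*} [PartialOrder P] [TopologicalSpace P] [IsScott P univ]

def Iic (x : P) : Closeds P := ⟨Set.Iic x, isClosed_Iic⟩

lemma Iic_le_iff {x : P} {A : Closeds P} : Iic x ≤ A ↔ x ∈ A :=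
  ⟨fun h => h (le_refl x), fun hx _ hy => IsScott.isLowerSet_of_isClosed A.isClosed hy hx⟩

lemma scottContinuous_Iic : ScottContinuous (Iic : P → Closeds P) := by
  intro d hne hdir a hlub
  refine ⟨?_, fun B hB => Iic_le_iff.2 ?_⟩
  · rintro _ ⟨y, hy, rfl⟩ z hz
    exact le_trans hz (hlub.1 hy)
  · exact IsScott.dirSupClosed_of_isClosed B.isClosed (fun y hy => Iic_le_iff.1 (hB ⟨y, hy, rfl⟩))
      hne hdir hlub

lemma scottContinuous_Iic_sup (C : Closeds P) : ScottContinuous fun x : P => Iic x ⊔ C :=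
  (scottContinuous_Iic.prodMk (ScottContinuous.const C)).comp ScottContinuous.sup₂

def supIicPreimage {𝒰 : Set (Closeds P)} (h𝒰 : IsOpen[scott (Closeds P) univ] 𝒰)
    (C : Closeds P) : Opens P :=
  ⟨(fun x => Iic x ⊔ C) ⁻¹' 𝒰, by
    rw [IsScott.isOpen_iff_isUpperSet_and_dirSupInaccOn (D := univ), dirSupInaccOn_univ]
    exact isOpen_scott_iff.1 ((scottContinuous_Iic_sup C).isOpen_preimage h𝒰)⟩

lemma scottContinuous_supIicPreimage {𝒰 : Set (Closeds P)}
    (h𝒰 : IsOpen[scott (Closeds P) univ] 𝒰) : ScottContinuous (supIicPreimage h𝒰) := by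
  have hmono : Monotone (supIicPreimage h𝒰) := fun _ _ hBC _ hx =>
    (isOpen_scott_iff.1 h𝒰).1 (sup_le_sup_left hBC _) hx
  intro d hne hdir a hlub
  refine ⟨hmono.mem_upperBounds_image hlub.1, fun O hO x hx => ?_⟩
  have hsup : ScottContinuous fun B : Closeds P => Iic x ⊔ B :=
    ((ScottContinuous.const _).prodMk ScottContinuous.id).comp ScottContinuous.sup₂
  obtain ⟨B, hB, hxB⟩ := (isOpen_scott_iff.1 (hsup.isOpen_preimage h𝒰)).2 hne hdir hlub hx
  exact hO ⟨B, hB, rfl⟩ hxB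

lemma mem_nhds_Iic_sup (hP : CoreCompact P) {C : Closeds P}
    (hC : ∀ 𝒰, IsOpen[scott (Closeds P) univ] 𝒰 → C ∈ 𝒰 → 𝒰 ∈ 𝓝 C) (x : P)
    {𝒰 : Set (Closeds P)} (h𝒰 : IsOpen[scott (Closeds P) univ] 𝒰) (hx : Iic x ⊔ C ∈ 𝒰) :
    𝒰 ∈ 𝓝 (Iic x ⊔ C) := by
  obtain ⟨V, hVC, hxV⟩ := hP.exists_wayBelow_mem (U := supIicPreimage h𝒰 C) hx
  set 𝒱 := supIicPreimage h𝒰 ⁻¹' {W | WayBelow V W}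
  have h𝒱 : IsOpen[scott (Closeds P) univ] 𝒱 :=
    (scottContinuous_supIicPreimage h𝒰).isOpen_preimage (ContinuousPoset.isOpen_setOf_wayBelow hP V)
  have hsub : hitting (V : Set P) ∩ 𝒱 ⊆ 𝒰 := by
    rintro B ⟨⟨y, hyB, hyV⟩, hB⟩
    have hy : Iic y ⊔ B ∈ 𝒰 := hB.le hyV
    rwa [sup_eq_right.2 (Iic_le_iff.2 hyB)] at hy
  have hV : hitting (V : Set P) ∈ 𝓝 (Iic x ⊔ C) :=
    (isOpen_hitting V.isOpen).mem_nhds ⟨x, Iic_le_iff.1 le_sup_left, hxV⟩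
  have h𝒱C : 𝒱 ∈ 𝓝 (Iic x ⊔ C) := specializes_iff_le.2 le_sup_right (hC 𝒱 h𝒱 hVC)
  exact Filter.mem_of_superset (Filter.inter_mem hV h𝒱C) hsub

lemma mem_nhds_finsetSup_Iic (hP : CoreCompact P) (s : Finset P) {𝒰 : Set (Closeds P)}
    (h𝒰 : IsOpen[scott (Closeds P) univ] 𝒰) (hs : s.sup Iic ∈ 𝒰) : 𝒰 ∈ 𝓝 (s.sup Iic) := by
  classical
  induction s using Finset.induction_on generalizing 𝒰 with
  | empty =>
    rw [eq_univ_of_forall fun B => (isOpen_scott_iff.1 h𝒰).1 bot_le hs]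
    exact Filter.univ_mem
  | insert x s _ ih =>
    rw [Finset.sup_insert] at hs ⊢
    exact mem_nhds_Iic_sup hP (fun _ => ih) x h𝒰 hs

lemma directedOn_finsetSup_Iic (A : Closeds P) :
    DirectedOn (· ≤ ·) ((fun s : Finset P => s.sup Iic) '' {s | ↑s ⊆ (A : Set P)}) := by
  classical
  rintro _ ⟨s, hs, rfl⟩ _ ⟨t, ht, rfl⟩
  have hst : ↑(s ∪ t) ⊆ (A : Set P) := Finset.coe_union s t ▸ union_subset hs ht
  exact ⟨(s ∪ t).sup Iic, ⟨s ∪ t, hst, rfl⟩,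
    Finset.sup_mono Finset.subset_union_left, Finset.sup_mono Finset.subset_union_right⟩

lemma isLUB_finsetSup_Iic (A : Closeds P) :
    IsLUB ((fun s : Finset P => s.sup Iic) '' {s | ↑s ⊆ (A : Set P)}) A := by
  refine ⟨?_, fun B hB x hx => Iic_le_iff.1 (hB ⟨{x}, by simpa using hx, Finset.sup_singleton⟩)⟩
  rintro _ ⟨s, hs, rfl⟩
  exact Finset.sup_le fun x hx => Iic_le_iff.2 (hs hx)

lemma lowerVietoris_le_scott (hP : CoreCompact P) : lowerVietoris P ≤ scott (Closeds P) univ := by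
  intro 𝒰 h𝒰
  refine isOpen_iff_mem_nhds.2 fun A hA => ?_
  obtain ⟨_, ⟨s, hsA, rfl⟩, hs⟩ := (isOpen_scott_iff.1 h𝒰).2
    (d := (fun s : Finset P => s.sup Iic) '' {s | ↑s ⊆ (A : Set P)}) ⟨⊥, ∅, by simp, rfl⟩
    (directedOn_finsetSup_Iic A) (isLUB_finsetSup_Iic A) hA
  exact specializes_iff_le.2 ((isLUB_finsetSup_Iic A).1 ⟨s, hsA, rfl⟩)
    (mem_nhds_finsetSup_Iic hP s h𝒰 hs)

end ScottClosed

end TopologicalSpace.Closeds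

/-- If `(P, σ(P))` is core-compact then on `Γ(P)` the Scott topology coincides with the lower
Vietoris topology, and `(Γ(P), σ(Γ(P)))` is sober and locally compact. -/
theorem scott_eq_lowerVietoris_and_sober_locallyCompact_of_coreCompact
    {P : Type*} [PartialOrder P] [TopologicalSpace P] [Topology.IsScott P Set.univ]
    (h : CoreCompact P) :
    Topology.scott (TopologicalSpace.Closeds P) Set.univ = lowerVietoris P ∧
    @T0Space (TopologicalSpace.Closeds P) (Topology.scott (TopologicalSpace.Closeds P) Set.univ) ∧
    @QuasiSober (TopologicalSpace.Closeds P)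
      (Topology.scott (TopologicalSpace.Closeds P) Set.univ) ∧
    @LocallyCompactSpace (TopologicalSpace.Closeds P)
      (Topology.scott (TopologicalSpace.Closeds P) Set.univ) := by
  have hscott : scott (Closeds P) univ = lowerVietoris P :=
    le_antisymm Closeds.scott_le_lowerVietoris (Closeds.lowerVietoris_le_scott h)
  rw [hscott]
  exact ⟨rfl, Closeds.t0Space, Closeds.quasiSober, Closeds.locallyCompactSpace h⟩
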